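/- Fix B₁, D₁ > 0 and σ > 0, and suppose that for all T > 1 and all ε with 0 < ε ≤ n^{-2/3}T^{4/3} ≤ 1/2 one has |c_n|² · ε n^{-2/3}T^{4/3} ≤ B₁ ε T² + D₁ T^{2−σ}. Then |c_n|² ≤ C' n^{1−δ(σ)} with δ(σ) = σ/(4+3σ), for some C' depending only on B₁, D₁, σ. In particular σ = 2/3 yields |c_n|² ≤ C' n^{8/9}. -/

import Mathlib

/-!
Take `T = n ^ (2 / (4 + 3σ))` and the largest admissible `ε = n^{-2/3} T^{4/3}`, which then equals
`T^{-σ}`. Both terms on the right become `T^{2-σ}`, so dividing by `ε² = T^{-2σ}` gives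
`|c_n|² ≤ (B₁ + D₁) T^{2+σ} = (B₁ + D₁) n^{1-δ(σ)}`. The constraint `ε ≤ 1/2` holds once
`T^σ ≥ 2`, i.e. for `n ≥ 2 ^ ((4 + 3σ) / (2σ))`.
-/

open Real

lemma le_mul_rpow_of_mul_rpow_neg_sq_le {c B D σ T : ℝ} (hT : 0 < T)
    (h : c * (T ^ (-σ) * T ^ (-σ)) ≤ B * T ^ (-σ) * T ^ 2 + D * T ^ (2 - σ)) :
    c ≤ (B + D) * T ^ (2 + σ) := by
  have hfirst : T ^ (-σ) * T ^ 2 = T ^ (2 - σ) := by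
    rw [← rpow_two, ← rpow_add hT]; ring_nf
  have hsplit : T ^ (2 - σ) = T ^ (2 + σ) * (T ^ (-σ) * T ^ (-σ)) := by
    rw [← rpow_add hT, ← rpow_add hT]; ring_nf
  refine le_of_mul_le_mul_right ?_ (by positivity : 0 < T ^ (-σ) * T ^ (-σ))
  calc c * (T ^ (-σ) * T ^ (-σ)) ≤ B * T ^ (-σ) * T ^ 2 + D * T ^ (2 - σ) := h
    _ = (B + D) * T ^ (2 + σ) * (T ^ (-σ) * T ^ (-σ)) := by
      rw [mul_assoc B, hfirst, hsplit]; ring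

section Exponents

variable {n σ : ℝ}

lemma rpow_neg_two_thirds_mul_rpow_four_thirds (hn : 0 < n) (hσ : 0 ≤ σ) :
    n ^ (-(2:ℝ) / 3) * (n ^ (2 / (4 + 3 * σ))) ^ ((4:ℝ) / 3) = (n ^ (2 / (4 + 3 * σ))) ^ (-σ) := by
  rw [← rpow_mul hn.le, ← rpow_mul hn.le, ← rpow_add hn]
  congr 1
  field_simp
  ring

lemma rpow_two_div_rpow_two_add (hn : 0 < n) (hσ : 0 ≤ σ) :
    (n ^ (2 / (4 + 3 * σ))) ^ (2 + σ) = n ^ (1 - σ / (4 + 3 * σ)) := by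
  rw [← rpow_mul hn.le]
  congr 1
  field_simp
  ring

lemma two_le_rpow_two_div_rpow (hσ : 0 < σ) (hn : 2 ^ ((4 + 3 * σ) / (2 * σ)) ≤ n) :
    2 ≤ (n ^ (2 / (4 + 3 * σ))) ^ σ := by
  have hn0 : 0 ≤ n := (by positivity : (0:ℝ) ≤ 2 ^ ((4 + 3 * σ) / (2 * σ))).trans hn
  have hexp : (4 + 3 * σ) / (2 * σ) = (2 / (4 + 3 * σ) * σ)⁻¹ := by
    field_simp
  rw [← rpow_mul hn0]
  rw [hexp] at hn
  exact (rpow_inv_le_iff_of_pos (by norm_num) hn0 (by positivity)).1 hn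

end Exponents

lemma one_lt_of_two_le_rpow {t σ : ℝ} (ht : 0 ≤ t) (hσ : 0 < σ) (h : 2 ≤ t ^ σ) : 1 < t := by
  by_contra! ht1
  linarith [rpow_le_one ht ht1 hσ.le]

lemma rpow_neg_le_half_of_two_le_rpow {t σ : ℝ} (ht : 0 ≤ t) (h : 2 ≤ t ^ σ) :
    t ^ (-σ) ≤ 1 / 2 := by
  rw [rpow_neg ht, one_div]
  exact inv_anti₀ two_pos h

theorem stmt12 (B₁ D₁ σ : ℝ) (hB : 0 < B₁) (hD : 0 < D₁) (hσ : 0 < σ) :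
    ∃ C > 0, ∃ N : ℝ, ∀ n cn2 : ℝ, N ≤ n → 0 ≤ cn2 →
      (∀ T ε : ℝ, 1 < T → 0 < ε → ε ≤ n ^ (-(2:ℝ)/3) * T ^ ((4:ℝ)/3) →
          n ^ (-(2:ℝ)/3) * T ^ ((4:ℝ)/3) ≤ 1/2 →
          cn2 * (ε * n ^ (-(2:ℝ)/3) * T ^ ((4:ℝ)/3)) ≤ B₁ * ε * T ^ 2 + D₁ * T ^ ((2:ℝ) - σ)) →
      cn2 ≤ C * n ^ ((1:ℝ) - σ / (4 + 3 * σ)) := by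
  refine ⟨B₁ + D₁, by positivity, 2 ^ ((4 + 3 * σ) / (2 * σ)), fun n cn2 hN _ hamp => ?_⟩
  have hn : 0 < n := (by positivity : (0:ℝ) < 2 ^ ((4 + 3 * σ) / (2 * σ))).trans_le hN
  have hscale := rpow_neg_two_thirds_mul_rpow_four_thirds hn hσ.le
  set T := n ^ (2 / (4 + 3 * σ))
  have hT : 0 < T := by positivity
  have hTσ : 2 ≤ T ^ σ := two_le_rpow_two_div_rpow hσ hN
  have h := hamp T (T ^ (-σ)) (one_lt_of_two_le_rpow hT.le hσ hTσ) (by positivity) hscale.ge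
    (hscale ▸ rpow_neg_le_half_of_two_le_rpow hT.le hTσ)
  rw [mul_assoc (T ^ (-σ)), hscale] at h
  rw [← rpow_two_div_rpow_two_add hn hσ.le]
  exact le_mul_rpow_of_mul_rpow_neg_sq_le hT h
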